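/- Let X and Y be finite discrete random variables with joint probabilities p_{x,y}. Then 2^{-H(Y|X)} ≤ ∑_x max_y p_{x,y}, where H(Y|X) = ∑_x p_x · H(Y|X=x) is the conditional Shannon entropy (base 2). -/

import Mathlib

/-! The Bayes predictor guesses, for each `x`, an outcome `y` maximising `p x y`; write `M x` for
that maximum and `P x = ∑ y, p x y`. Since every `p x y ≤ M x`, the conditional entropy is at least
`∑ x, P x * log₂ (P x / M x)`, a relative entropy of the weights `P` against the masses `M`.
Weighted AM–GM (Gibbs' inequality) bounds `2` to the power of minus this quantity by `∑ x, M x`. -/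

open Finset Real

theorem Real.sum_mul_logb_div_le {ι : Type*} {s : Finset ι} {b c m : ℝ} {q : ι → ℝ}
    (hb : 1 < b) (hc : 0 ≤ c) (hq : ∀ i ∈ s, 0 ≤ q i) (hqm : ∀ i ∈ s, q i ≤ m) :
    ∑ i ∈ s, q i * logb b (q i / c) ≤ (∑ i ∈ s, q i) * logb b (m / c) := by
  rw [sum_mul]
  refine sum_le_sum fun i hi => ?_
  rcases (hq i hi).eq_or_lt with hqi | hqi
  · simp [← hqi]
  rcases hc.eq_or_lt with hc0 | hc0
  · simp [← hc0]
  exact mul_le_mul_of_nonneg_left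
    (logb_le_logb_of_le hb (div_pos hqi hc0) (div_le_div_of_nonneg_right (hqm i hi) hc0.le)) hqi.le

theorem Real.rpow_sum_mul_logb_div_le_sum {ι : Type*} {s : Finset ι} {b : ℝ} {w v : ι → ℝ}
    (hb : 0 < b) (hb1 : b ≠ 1) (hw : ∀ i ∈ s, 0 ≤ w i) (hw1 : ∑ i ∈ s, w i = 1)
    (hv : ∀ i ∈ s, 0 ≤ v i) (hwv : ∀ i ∈ s, w i ≠ 0 → 0 < v i) :
    b ^ (∑ i ∈ s, w i * logb b (v i / w i)) ≤ ∑ i ∈ s, v i := by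
  have hpow : ∀ i ∈ s, b ^ (w i * logb b (v i / w i)) = (v i / w i) ^ w i := by
    intro i hi
    by_cases hwi : w i = 0
    · simp [hwi]
    rw [mul_comm, rpow_mul hb.le,
      rpow_logb hb hb1 (div_pos (hwv i hi hwi) ((hw i hi).lt_of_ne' hwi))]
  have hcancel : ∀ i ∈ s, w i * (v i / w i) ≤ v i := by
    intro i hi
    by_cases hwi : w i = 0
    · simpa [hwi] using hv i hi
    rw [mul_div_cancel₀ _ hwi]
  calc b ^ (∑ i ∈ s, w i * logb b (v i / w i))
      = ∏ i ∈ s, (v i / w i) ^ w i := by rw [rpow_sum_of_pos hb, prod_congr rfl hpow]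
    _ ≤ ∑ i ∈ s, w i * (v i / w i) :=
      geom_mean_le_arith_mean_weighted s w _ hw hw1 fun i hi => div_nonneg (hv i hi) (hw i hi)
    _ ≤ ∑ i ∈ s, v i := sum_le_sum hcancel

/-- For finite discrete random variables `X` and `Y` with joint pmf `p`,
`2 ^ (-H(Y|X)) ≤ ∑ x, max_y p x y`, where
`H(Y|X) = -∑ x, ∑ y, p x y * log₂ (p x y / (∑ y', p x y'))`. -/
theorem cond_score_le_bayes_accuracy {α β : Type*} [Fintype α] [Fintype β] [Nonempty β]
    (p : α → β → ℝ) (hp : ∀ x y, 0 ≤ p x y) (hsum : ∑ x, ∑ y, p x y = 1) :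
    (2 : ℝ) ^ (-(-∑ x, ∑ y, p x y * Real.logb 2 (p x y / ∑ y', p x y'))) ≤
      ∑ x, Finset.univ.sup' Finset.univ_nonempty (fun y => p x y) := by
  set P : α → ℝ := fun x => ∑ y, p x y
  set M : α → ℝ := fun x => univ.sup' univ_nonempty (fun y => p x y)
  have hpM : ∀ x y, p x y ≤ M x := fun x y => le_sup' (fun y => p x y) (mem_univ y)
  have hP : ∀ x, 0 ≤ P x := fun x => sum_nonneg fun y _ => hp x y
  have hPM : ∀ x, P x ≤ Fintype.card β * M x := fun x => by
    simpa using sum_le_card_nsmul univ (fun y => p x y) (M x) fun y _ => hpM x y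
  have hM : ∀ x, 0 ≤ M x := fun x =>
    nonneg_of_mul_nonneg_right ((hP x).trans (hPM x)) (by positivity)
  rw [neg_neg]
  calc (2 : ℝ) ^ (∑ x, ∑ y, p x y * logb 2 (p x y / P x))
      ≤ 2 ^ (∑ x, P x * logb 2 (M x / P x)) :=
        rpow_le_rpow_of_exponent_le one_le_two <| sum_le_sum fun x _ =>
          sum_mul_logb_div_le one_lt_two (hP x) (fun y _ => hp x y) fun y _ => hpM x y
    _ ≤ ∑ x, M x :=
        rpow_sum_mul_logb_div_le_sum two_pos (by norm_num) (fun x _ => hP x) hsum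
          (fun x _ => hM x) fun x _ hPx =>
            pos_of_mul_pos_right (((hP x).lt_of_ne' hPx).trans_le (hPM x)) (by positivity)
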